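/- Macro-diversity feasibility: let α_n > 0, g_{n,k} ≥ 0 for n = 1,…,N and k = 1,…,K, σ̂ ≥ 0, and define T_i(q) := max_k Σ_{n≠i} α_n g_{n,k} q_n + σ̂ for q ∈ ℝ^N with nonnegative entries. If max_{i,k} Σ_{n≠i} α_n g_{n,k} < 1, then T has a unique nonnegative fixed point, obtainable as the limit of iterating T from any nonnegative starting vector. -/

import Mathlib

/-!
Each `T_i` is `σ` plus a maximum of linear forms with nonnegative coefficients, so in the sup
metric it is Lipschitz with constant `max_k Σ_{n ≠ i} α_n g_{n,k}`. The feasibility condition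
makes `T` a contraction of `ℝ^N`, and Banach's fixed point theorem gives the unique fixed point
and the convergence of the iteration. Since `σ ≥ 0`, `T` maps the closed nonnegative orthant into
itself, so the fixed point is nonnegative.
-/

open Finset Set NNReal

lemma lipschitzWith_sum_mul_apply {ι : Type*} [Fintype ι] (s : Finset ι) (w : ι → ℝ) :
    LipschitzWith (∑ n ∈ s, ‖w n‖₊) fun q : ι → ℝ => ∑ n ∈ s, w n * q n := by
  refine LipschitzWith.of_dist_le_mul fun q q' => ?_
  calc dist (∑ n ∈ s, w n * q n) (∑ n ∈ s, w n * q' n)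
      = |∑ n ∈ s, w n * (q n - q' n)| := by
        rw [Real.dist_eq, ← sum_sub_distrib]; simp only [mul_sub]
    _ ≤ ∑ n ∈ s, |w n| * dist (q n) (q' n) := by
        refine (abs_sum_le_sum_abs _ _).trans_eq ?_
        simp only [abs_mul, Real.dist_eq]
    _ ≤ ∑ n ∈ s, |w n| * dist q q' := by
        gcongr with n; exact dist_le_pi_dist q q' n
    _ = (∑ n ∈ s, ‖w n‖₊ : ℝ≥0) * dist q q' := by
        simp [sum_mul]

lemma LipschitzWith.finset_sup' {α κ : Type*} [PseudoEMetricSpace α] {s : Finset κ}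
    (hs : s.Nonempty) {f : κ → α → ℝ} {K : κ → ℝ≥0} (hf : ∀ k ∈ s, LipschitzWith (K k) (f k)) :
    LipschitzWith (s.sup K) fun x => s.sup' hs (f · x) := by
  induction hs using Finset.Nonempty.cons_induction with
  | singleton k => simpa using hf k (mem_singleton_self k)
  | cons k s hk hs ih =>
    simp only [sup'_cons hs, sup_cons]
    exact (hf k (mem_cons_self k s)).max (ih fun j hj => hf j (mem_cons_of_mem hj))

lemma LipschitzWith.pi {α ι : Type*} [PseudoEMetricSpace α] [Fintype ι] {β : ι → Type*}
    [∀ i, PseudoEMetricSpace (β i)] {f : α → ∀ i, β i} {K : ι → ℝ≥0}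
    (hf : ∀ i, LipschitzWith (K i) fun x => f x i) :
    LipschitzWith (univ.sup K) f := fun x y =>
  edist_pi_le_iff.2 fun i => (hf i x y).trans <| by
    gcongr; exact_mod_cast le_sup (f := K) (mem_univ i)

lemma ContractingWith.fixedPoint_mem {α : Type*} [MetricSpace α] [Nonempty α] [CompleteSpace α]
    {K : ℝ≥0} {f : α → α} (hf : ContractingWith K f) {s : Set α} (hs : IsClosed s)
    (hsf : MapsTo f s s) {x : α} (hx : x ∈ s) : fixedPoint f hf ∈ s :=
  hs.mem_of_tendsto (hf.tendsto_iterate_fixedPoint x)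
    (Filter.Eventually.of_forall fun n => hsf.iterate n hx)

theorem stmt_16 (N K : ℕ) (α : Fin N → ℝ) (hα : ∀ n, 0 < α n)
    (g : Fin N → Fin (K + 1) → ℝ) (hg : ∀ n k, 0 ≤ g n k)
    (σ : ℝ) (hσ : 0 ≤ σ)
    (T : (Fin N → ℝ) → Fin N → ℝ)
    (hT : ∀ q i, T q i =
      (Finset.univ.sup' Finset.univ_nonempty
        (fun k : Fin (K + 1) => ∑ n ∈ Finset.univ.erase i, α n * g n k * q n)) + σ)
    (hfeas : ∀ (i : Fin N) (k : Fin (K + 1)),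
      (∑ n ∈ Finset.univ.erase i, α n * g n k) < 1) :
    ∃ q : Fin N → ℝ, (∀ i, 0 ≤ q i) ∧ T q = q ∧
      (∀ q' : Fin N → ℝ, (∀ i, 0 ≤ q' i) → T q' = q' → q' = q) ∧
      (∀ q0 : Fin N → ℝ, (∀ i, 0 ≤ q0 i) →
        Filter.Tendsto (fun t => T^[t] q0) Filter.atTop (nhds q)) := by
  have hw : ∀ n k, 0 ≤ α n * g n k := fun n k => mul_nonneg (hα n).le (hg n k)
  set c : ℝ≥0 := univ.sup fun i => univ.sup fun k => ∑ n ∈ univ.erase i, ‖α n * g n k‖₊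
  have hc : c < 1 := by
    refine (Finset.sup_lt_iff zero_lt_one).2 fun i _ =>
      (Finset.sup_lt_iff zero_lt_one).2 fun k _ => ?_
    rw [← NNReal.coe_lt_coe, NNReal.coe_sum]
    simpa only [coe_nnnorm, Real.norm_of_nonneg (hw _ k), NNReal.coe_one] using hfeas i k
  have hlip : LipschitzWith c T := by
    refine LipschitzWith.pi fun i => ?_
    simp only [hT]
    simpa using (LipschitzWith.finset_sup' univ_nonempty fun k _ =>
      lipschitzWith_sum_mul_apply (univ.erase i) fun n => α n * g n k).add (LipschitzWith.const σ)
  have hcontr : ContractingWith c T := ⟨hc, hlip⟩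
  have hnonneg : MapsTo T (Ici 0) (Ici 0) := fun q hq i => by
    rw [Pi.zero_apply, hT]
    refine add_nonneg (le_sup'_of_le _ (mem_univ 0) (sum_nonneg fun n _ => ?_)) hσ
    exact mul_nonneg (hw n 0) (hq n)
  refine ⟨ContractingWith.fixedPoint T hcontr,
    hcontr.fixedPoint_mem isClosed_Ici hnonneg self_mem_Ici, hcontr.fixedPoint_isFixedPt,
    fun q _ hq => hcontr.fixedPoint_unique hq,
    fun q _ => hcontr.tendsto_iterate_fixedPoint q⟩
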